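/- The operator norm N(p) of the Laplace transform L f(x) = ∫₀^∞ e^{−xt} f(t) dt from L^p(0,∞) to L^{p'}(0,∞), 1 ≤ p ≤ 2, equals the norm of the convolution operator F ↦ (h_p ∗ F̃) from L^p(ℝ) to L^{p'}(ℝ), where h_p(y) = exp(y/p' − e^y) and F̃(y) = F(−y); in particular N(p) ≤ ‖h_p‖_{p'/2} = (2π/p')^{1/p'} (Hardy's estimate). -/

import Mathlib

/-!
The substitutions `x = e^y`, `t = e^s` together with the weights `f(x) ↦ f(e^y) e^{y/p}` and
`g(x) ↦ g(e^s) e^{s/p'}` are onto isometries `L^p(0,∞) → L^p(ℝ)` and `L^{p'}(0,∞) → L^{p'}(ℝ)`,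
and because `1/p + 1/p' = 1` they conjugate the Laplace transform into the correlation with
`h(y) = exp(y/p' - e^y)`; hence the two operator norms agree. The bound is Young's inequality
with the kernel in `L^{p'/2}`, where `∫ h^{p'/2} = ∫ exp(y/2 - (p'/2) e^y) dy = Γ(1/2) (2/p')^{1/2}`
is a Gamma integral after substituting `u = e^y`.
-/

open MeasureTheory Set Real
open scoped ENNReal

noncomputable section

theorem lintegral_Ioi_eq_lintegral_exp (g : ℝ → ℝ≥0∞) :
    ∫⁻ x in Ioi 0, g x = ∫⁻ y, ENNReal.ofReal (exp y) * g (exp y) := by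
  rw [← range_exp, ← image_univ, lintegral_image_eq_lintegral_abs_det_fderiv_mul volume
    MeasurableSet.univ (fun x _ => (hasDerivAt_exp x).hasDerivWithinAt.hasFDerivWithinAt)
    exp_injective.injOn g]
  simp [abs_of_pos (exp_pos _)]

theorem integral_Ioi_eq_integral_exp {E : Type*} [NormedAddCommGroup E] [NormedSpace ℝ E]
    (g : ℝ → E) : ∫ x in Ioi 0, g x = ∫ y, exp y • g (exp y) := by
  rw [← range_exp, ← image_univ, integral_image_eq_integral_abs_deriv_smul MeasurableSet.univ
    (fun x _ => (hasDerivAt_exp x).hasDerivWithinAt) exp_injective.injOn g]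
  simp [abs_of_pos (exp_pos _)]

theorem quasiMeasurePreserving_exp :
    Measure.QuasiMeasurePreserving exp volume (volume.restrict (Ioi 0)) := by
  refine ⟨measurable_exp, Measure.AbsolutelyContinuous.mk fun s hs hs0 => ?_⟩
  rw [Measure.restrict_apply hs] at hs0
  have : exp ⁻¹' s = log '' (s ∩ Ioi 0) := by
    ext y
    simp only [mem_preimage, mem_image, mem_inter_iff, mem_Ioi]
    exact ⟨fun h => ⟨exp y, ⟨h, exp_pos y⟩, log_exp y⟩,
      by rintro ⟨x, ⟨hx, hx0⟩, rfl⟩; rwa [exp_log hx0]⟩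
  rw [Measure.map_apply measurable_exp hs, this]
  exact addHaar_image_eq_zero_of_differentiableOn_of_addHaar_eq_zero volume
    (differentiableOn_log.mono fun x hx => hx.2.ne') hs0

theorem quasiMeasurePreserving_log :
    Measure.QuasiMeasurePreserving log (volume.restrict (Ioi 0)) volume := by
  refine ⟨measurable_log, Measure.AbsolutelyContinuous.mk fun s hs hs0 => ?_⟩
  have : log ⁻¹' s ∩ Ioi 0 = exp '' s := by
    ext x
    simp only [mem_inter_iff, mem_preimage, mem_Ioi, mem_image]
    exact ⟨fun ⟨hx, hx0⟩ => ⟨log x, hx, exp_log hx0⟩,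
      by rintro ⟨y, hy, rfl⟩; exact ⟨by rwa [log_exp], exp_pos y⟩⟩
  rw [Measure.map_apply measurable_log hs, Measure.restrict_apply (measurable_log hs), this]
  exact addHaar_image_eq_zero_of_differentiableOn_of_addHaar_eq_zero volume
    differentiable_exp.differentiableOn hs0

theorem lintegral_ofReal_exp_mul_sub_mul_exp {a b : ℝ} (ha : 0 < a) (hb : 0 < b) :
    ∫⁻ y, ENNReal.ofReal (exp (a * y - b * exp y)) = ENNReal.ofReal ((1 / b) ^ a * Gamma a) := by
  have hsplit : ∀ y, ENNReal.ofReal (exp (a * y - b * exp y))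
      = ENNReal.ofReal (exp y) * ENNReal.ofReal (exp y ^ (a - 1) * exp (-(b * exp y))) := by
    intro y
    rw [← ENNReal.ofReal_mul (exp_pos y).le, ← exp_mul, ← exp_add, ← exp_add]
    ring_nf
  have hint : IntegrableOn (fun u : ℝ => u ^ (a - 1) * exp (-(b * u))) (Ioi 0) := by
    refine (integrableOn_rpow_mul_exp_neg_mul_rpow (s := a - 1) (by linarith) zero_lt_one
      hb).congr_fun (fun u _ => ?_) measurableSet_Ioi
    simp only [rpow_one, neg_mul]
  have hnonneg : 0 ≤ᵐ[volume.restrict (Ioi 0)] fun u : ℝ => u ^ (a - 1) * exp (-(b * u)) := by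
    filter_upwards [self_mem_ae_restrict measurableSet_Ioi] with u hu
    have : 0 < u := hu
    positivity
  simp_rw [hsplit]
  rw [← lintegral_Ioi_eq_lintegral_exp (fun u => ENNReal.ofReal (u ^ (a - 1) * exp (-(b * u)))),
    ← ofReal_integral_eq_lintegral_ofReal hint hnonneg, integral_rpow_mul_exp_neg_mul_Ioi ha hb]

theorem ENNReal.lintegral_mul_mul_rpow_le {α : Type*} [MeasurableSpace α] {μ : Measure α}
    {f g h : α → ℝ≥0∞} (hf : AEMeasurable f μ) (hg : AEMeasurable g μ) (hh : AEMeasurable h μ)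
    {a b c : ℝ} (ha : 0 ≤ a) (hb : 0 ≤ b) (hc : 0 ≤ c) (habc : a + b + c = 1) :
    ∫⁻ x, f x ^ a * g x ^ b * h x ^ c ∂μ
      ≤ (∫⁻ x, f x ∂μ) ^ a * (∫⁻ x, g x ∂μ) ^ b * (∫⁻ x, h x ∂μ) ^ c := by
  simpa [Fin.prod_univ_three] using ENNReal.lintegral_prod_norm_pow_le Finset.univ
    (f := ![f, g, h]) (fun i _ => by fin_cases i <;> assumption)
    (p := ![a, b, c]) (by simp [Fin.sum_univ_three, habc])
    (fun i _ => by fin_cases i <;> assumption)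

section Young

variable {G : Type*} [MeasurableSpace G] [AddCommGroup G] [MeasurableAdd₂ G]
  {μ : Measure G} [μ.IsAddLeftInvariant]

theorem ENNReal.mul_eq_young_split {p p' : ℝ} (hp : 0 < p) (hpp' : p ≤ p') (a b : ℝ≥0∞) :
    a * b = (a ^ (p' / 2) * b ^ p) ^ (1 / p') * (a ^ (p' / 2)) ^ (1 / p')
      * (b ^ p) ^ (1 / p - 1 / p') := by
  have hp' : 0 < p' := hp.trans_le hpp'
  have hθ : 0 ≤ 1 / p - 1 / p' := sub_nonneg.2 (one_div_le_one_div_of_le hp hpp')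
  have ea : p' / 2 * (1 / p') + p' / 2 * (1 / p') = 1 := by field_simp; ring
  have eb : p * (1 / p') + p * (1 / p - 1 / p') = 1 := by field_simp; ring
  calc a * b = a ^ (p' / 2 * (1 / p') + p' / 2 * (1 / p'))
        * b ^ (p * (1 / p') + p * (1 / p - 1 / p')) := by
        rw [ea, eb, ENNReal.rpow_one, ENNReal.rpow_one]
    _ = _ := by
      rw [ENNReal.rpow_add_of_nonneg _ _ (by positivity) (by positivity),
        ENNReal.rpow_add_of_nonneg _ _ (by positivity) (by positivity),
        ENNReal.mul_rpow_of_nonneg _ _ (by positivity), ← ENNReal.rpow_mul, ← ENNReal.rpow_mul,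
        ← ENNReal.rpow_mul]
      ring

theorem lintegral_add_mul_le_young {p p' : ℝ} (hp : 0 < p) (hpp' : p ≤ p')
    (hconj : 1 / p + 1 / p' = 1) {H K : G → ℝ≥0∞} (hH : Measurable H) (hK : AEMeasurable K μ)
    (s : G) :
    ∫⁻ y, H (y + s) * K y ∂μ
      ≤ (∫⁻ y, H (y + s) ^ (p' / 2) * K y ^ p ∂μ) ^ (1 / p')
        * (∫⁻ x, H x ^ (p' / 2) ∂μ) ^ (1 / p') * (∫⁻ y, K y ^ p ∂μ) ^ (1 / p - 1 / p') := by
  have hp' : 0 < p' := hp.trans_le hpp'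
  have hHs : Measurable fun y => H (y + s) ^ (p' / 2) :=
    (hH.comp (measurable_add_const s)).pow_const _
  calc ∫⁻ y, H (y + s) * K y ∂μ
      = ∫⁻ y, (H (y + s) ^ (p' / 2) * K y ^ p) ^ (1 / p') * (H (y + s) ^ (p' / 2)) ^ (1 / p')
          * (K y ^ p) ^ (1 / p - 1 / p') ∂μ :=
        lintegral_congr fun y => ENNReal.mul_eq_young_split hp hpp' _ _
    _ ≤ (∫⁻ y, H (y + s) ^ (p' / 2) * K y ^ p ∂μ) ^ (1 / p')
          * (∫⁻ y, H (y + s) ^ (p' / 2) ∂μ) ^ (1 / p') * (∫⁻ y, K y ^ p ∂μ) ^ (1 / p - 1 / p') :=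
      ENNReal.lintegral_mul_mul_rpow_le (hHs.aemeasurable.mul (hK.pow_const _))
        hHs.aemeasurable (hK.pow_const _) (by positivity) (by positivity)
        (sub_nonneg.2 (one_div_le_one_div_of_le hp hpp')) (by linarith)
    _ = _ := by rw [lintegral_add_right_eq_self (fun x => H x ^ (p' / 2))]

variable [SFinite μ]

/-- Young's inequality `‖H ⋆ K‖_{p'} ≤ ‖H‖_{p'/2} ‖K‖_p`, raised to the power `p'`. -/
theorem lintegral_lintegral_add_mul_rpow_le {p p' : ℝ} (hp : 0 < p) (hpp' : p ≤ p')
    (hconj : 1 / p + 1 / p' = 1) {H K : G → ℝ≥0∞} (hH : Measurable H) (hK : AEMeasurable K μ) :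
    ∫⁻ s, (∫⁻ y, H (y + s) * K y ∂μ) ^ p' ∂μ
      ≤ (∫⁻ x, H x ^ (p' / 2) ∂μ) ^ (2 : ℝ) * (∫⁻ y, K y ^ p ∂μ) ^ (p' / p) := by
  have hp' : 0 < p' := hp.trans_le hpp'
  set A := ∫⁻ x, H x ^ (p' / 2) ∂μ
  set B := ∫⁻ y, K y ^ p ∂μ
  set I : G → ℝ≥0∞ := fun s => ∫⁻ y, H (y + s) ^ (p' / 2) * K y ^ p ∂μ
  have hIK : AEMeasurable (Function.uncurry fun s y => H (y + s) ^ (p' / 2) * K y ^ p)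
      (μ.prod μ) :=
    ((hH.comp (measurable_snd.add measurable_fst)).pow_const _).aemeasurable.mul
      (hK.pow_const _).comp_snd
  have fubini : ∫⁻ s, I s ∂μ = A * B := by
    rw [lintegral_lintegral_swap hIK]
    have inner : ∀ y, ∫⁻ s, H (y + s) ^ (p' / 2) * K y ^ p ∂μ = K y ^ p * A := fun y => by
      have hHy : AEMeasurable (fun s => H (y + s) ^ (p' / 2)) μ :=
        ((hH.comp (measurable_const_add y)).pow_const _).aemeasurable
      rw [lintegral_mul_const'' _ hHy, lintegral_add_left_eq_self (fun x => H x ^ (p' / 2)),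
        mul_comm]
    simp_rw [inner]
    rw [lintegral_mul_const'' _ (hK.pow_const _), mul_comm]
  have hB : B ^ (p' / p) = B * B ^ (p' / p - 1) := by
    conv_lhs => rw [show p' / p = 1 + (p' / p - 1) by ring]
    rw [ENNReal.rpow_add_of_nonneg _ _ zero_le_one (sub_nonneg.2 ((one_le_div hp).2 hpp')),
      ENNReal.rpow_one]
  calc ∫⁻ s, (∫⁻ y, H (y + s) * K y ∂μ) ^ p' ∂μ
      ≤ ∫⁻ s, I s * (A * B ^ (p' / p - 1)) ∂μ := lintegral_mono fun s => by
        refine (ENNReal.rpow_le_rpow (lintegral_add_mul_le_young hp hpp' hconj hH hK s)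
          hp'.le).trans_eq ?_
        rw [ENNReal.mul_rpow_of_nonneg _ _ hp'.le, ENNReal.mul_rpow_of_nonneg _ _ hp'.le,
          ← ENNReal.rpow_mul, ← ENNReal.rpow_mul, ← ENNReal.rpow_mul, one_div_mul_cancel hp'.ne',
          ENNReal.rpow_one, ENNReal.rpow_one, mul_assoc]
        congr 3
        field_simp
    _ = A ^ (2 : ℝ) * B ^ (p' / p) := by
      rw [lintegral_mul_const'' _ hIK.lintegral_prod_right, fubini, ENNReal.rpow_two, hB]
      ring

end Young

def lpOpNorm {α β : Type*} [MeasurableSpace α] [MeasurableSpace β] (p q : ℝ≥0∞)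
    (μ : Measure α) (ν : Measure β) (T : (α → ℂ) → β → ℂ) : ℝ≥0∞ :=
  ⨆ (f : α → ℂ) (_ : MemLp f p μ ∧ eLpNorm f p μ = 1), eLpNorm (T f) q ν

theorem lpOpNorm_zero_right {α β : Type*} [MeasurableSpace α] [MeasurableSpace β] (p : ℝ≥0∞)
    (μ : Measure α) (ν : Measure β) (T : (α → ℂ) → β → ℂ) : lpOpNorm p 0 μ ν T = 0 := by
  simp [lpOpNorm]

theorem lpOpNorm_le_lpOpNorm {α β γ δ : Type*} [MeasurableSpace α] [MeasurableSpace β]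
    [MeasurableSpace γ] [MeasurableSpace δ] {p q p' q' : ℝ≥0∞} {μ : Measure α} {ν : Measure β}
    {μ' : Measure γ} {ν' : Measure δ} {T : (α → ℂ) → β → ℂ} {S : (γ → ℂ) → δ → ℂ}
    (h : ∀ f, MemLp f p μ → eLpNorm f p μ = 1 →
      ∃ g, MemLp g p' μ' ∧ eLpNorm g p' μ' = 1 ∧ eLpNorm (T f) q ν ≤ eLpNorm (S g) q' ν') :
    lpOpNorm p q μ ν T ≤ lpOpNorm p' q' μ' ν' S :=
  iSup₂_le fun f hf => by
    obtain ⟨g, hg, hg1, hle⟩ := h f hf.1 hf.2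
    exact hle.trans (le_iSup₂_of_le g ⟨hg, hg1⟩ le_rfl)

theorem Complex.enorm_ofReal (r : ℝ) : ‖(r : ℂ)‖ₑ = ‖r‖ₑ := by
  rw [enorm_eq_nnnorm, Complex.nnnorm_real, enorm_eq_nnnorm]

def laplace (f : ℝ → ℂ) (x : ℝ) : ℂ := ∫ t in Ioi (0 : ℝ), ((exp (-(x * t)) : ℝ) : ℂ) * f t

def hardyKernel (q y : ℝ) : ℝ := exp (y / q - exp y)

theorem hardyKernel_nonneg (q y : ℝ) : 0 ≤ hardyKernel q y := (exp_pos _).le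

/-- The convolution `h ∗ F̃` of the paper, `F̃ y = F (-y)`. -/
def hardyConv (q : ℝ) (F : ℝ → ℂ) (s : ℝ) : ℂ := ∫ y, (hardyKernel q (y + s) : ℂ) * F y

def expRescale (r : ℝ) (f : ℝ → ℂ) (y : ℝ) : ℂ := f (exp y) * ((exp (y / r) : ℝ) : ℂ)

def logRescale (r : ℝ) (F : ℝ → ℂ) (x : ℝ) : ℂ := F (log x) * ((exp (-(log x / r)) : ℝ) : ℂ)

theorem lintegral_ofReal_hardyKernel_rpow {q : ℝ} (hq : 0 < q) :
    (∫⁻ y, ENNReal.ofReal (hardyKernel q y) ^ (q / 2)) ^ (2 : ℝ) = ENNReal.ofReal (2 * π / q) := by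
  have h : ∀ y, ENNReal.ofReal (hardyKernel q y) ^ (q / 2)
      = ENNReal.ofReal (exp (1 / 2 * y - q / 2 * exp y)) := by
    intro y
    rw [hardyKernel, ENNReal.ofReal_rpow_of_pos (exp_pos _), ← exp_mul]
    congr 2
    field_simp
  simp_rw [h]
  rw [lintegral_ofReal_exp_mul_sub_mul_exp one_half_pos (half_pos hq), Gamma_one_half_eq,
    ENNReal.ofReal_rpow_of_nonneg (by positivity) zero_le_two, ← sqrt_eq_rpow, rpow_two, mul_pow,
    sq_sqrt (by positivity), sq_sqrt pi_pos.le]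
  congr 1
  field_simp

theorem expRescale_logRescale (r : ℝ) (F : ℝ → ℂ) : expRescale r (logRescale r F) = F := by
  ext y
  rw [expRescale, logRescale, log_exp, mul_assoc, ← Complex.ofReal_mul, ← exp_add, neg_add_cancel,
    exp_zero, Complex.ofReal_one, mul_one]

theorem eLpNorm_expRescale {r : ℝ} (hr : 0 < r) (f : ℝ → ℂ) :
    eLpNorm (expRescale r f) (ENNReal.ofReal r) volume
      = eLpNorm f (ENNReal.ofReal r) (volume.restrict (Ioi 0)) := by
  rw [eLpNorm_eq_lintegral_rpow_enorm_toReal (by simp [hr]) (by simp),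
    eLpNorm_eq_lintegral_rpow_enorm_toReal (by simp [hr]) (by simp), ENNReal.toReal_ofReal hr.le,
    lintegral_Ioi_eq_lintegral_exp]
  congr 1
  refine lintegral_congr fun y => ?_
  -- the weight `e^{y/r}` contributes exactly the Jacobian `e^y` to `‖·‖ₑ ^ r`
  rw [expRescale, enorm_mul, ENNReal.mul_rpow_of_nonneg _ _ hr.le, mul_comm, Complex.enorm_ofReal,
    Real.enorm_of_nonneg (exp_pos _).le, ENNReal.ofReal_rpow_of_pos (exp_pos _), ← exp_mul,
    div_mul_cancel₀ _ hr.ne']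

theorem memLp_expRescale {r : ℝ} (hr : 0 < r) {f : ℝ → ℂ}
    (hf : MemLp f (ENNReal.ofReal r) (volume.restrict (Ioi 0))) :
    MemLp (expRescale r f) (ENNReal.ofReal r) volume :=
  ⟨(hf.1.comp_quasiMeasurePreserving quasiMeasurePreserving_exp).mul
    (by fun_prop : Continuous fun y => ((exp (y / r) : ℝ) : ℂ)).aestronglyMeasurable,
    by rw [eLpNorm_expRescale hr]; exact hf.2⟩

theorem memLp_logRescale {r : ℝ} (hr : 0 < r) {F : ℝ → ℂ} (hF : MemLp F (ENNReal.ofReal r) volume) :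
    MemLp (logRescale r F) (ENNReal.ofReal r) (volume.restrict (Ioi 0)) :=
  ⟨(hF.1.comp_quasiMeasurePreserving quasiMeasurePreserving_log).mul
    (by fun_prop : Measurable fun x => ((exp (-(log x / r)) : ℝ) : ℂ)).aestronglyMeasurable,
    by rw [← eLpNorm_expRescale hr, expRescale_logRescale]; exact hF.2⟩

theorem expRescale_laplace {p p' : ℝ} (hconj : 1 / p + 1 / p' = 1) (f : ℝ → ℂ) :
    expRescale p' (laplace f) = hardyConv p' (expRescale p f) := by
  ext s
  rw [expRescale, laplace, integral_Ioi_eq_integral_exp, ← integral_mul_const]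
  refine integral_congr_ae (Filter.Eventually.of_forall fun y => ?_)
  have hexp : exp y * exp (-(exp s * exp y)) * exp (s / p')
      = hardyKernel p' (y + s) * exp (y / p) := by
    rw [hardyKernel, ← exp_add, ← exp_add, ← exp_add, ← exp_add, exp_eq_exp, add_comm s y]
    linear_combination (-y) * hconj
  simp only [expRescale, Complex.real_smul]
  have hexpℂ := congrArg Complex.ofReal hexp
  simp only [Complex.ofReal_mul] at hexpℂ
  linear_combination f (exp y) * hexpℂ

theorem lpOpNorm_laplace_eq {p p' : ℝ} (hp : 0 < p) (hp' : 0 < p') (hconj : 1 / p + 1 / p' = 1) :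
    lpOpNorm (ENNReal.ofReal p) (ENNReal.ofReal p') (volume.restrict (Ioi 0))
        (volume.restrict (Ioi 0)) laplace
      = lpOpNorm (ENNReal.ofReal p) (ENNReal.ofReal p') volume volume (hardyConv p') := by
  refine le_antisymm (lpOpNorm_le_lpOpNorm fun f hf hf1 => ?_)
    (lpOpNorm_le_lpOpNorm fun F hF hF1 => ?_)
  · refine ⟨expRescale p f, memLp_expRescale hp hf, by rw [eLpNorm_expRescale hp, hf1], ?_⟩
    rw [← expRescale_laplace hconj, eLpNorm_expRescale hp']
  · refine ⟨logRescale p F, memLp_logRescale hp hF,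
      by rw [← eLpNorm_expRescale hp, expRescale_logRescale, hF1], ?_⟩
    rw [← eLpNorm_expRescale hp', expRescale_laplace hconj, expRescale_logRescale]

theorem eLpNorm_hardyConv_le {p p' : ℝ} (hp : 0 < p) (hpp' : p ≤ p') (hconj : 1 / p + 1 / p' = 1)
    {F : ℝ → ℂ} (hF : AEStronglyMeasurable F) :
    eLpNorm (hardyConv p' F) (ENNReal.ofReal p') volume
      ≤ ENNReal.ofReal ((2 * π / p') ^ (1 / p')) * eLpNorm F (ENNReal.ofReal p) volume := by
  have hp' : 0 < p' := hp.trans_le hpp'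
  have hH : Measurable fun x => ENNReal.ofReal (hardyKernel p' x) := by
    unfold hardyKernel; fun_prop
  have hpointwise : ∀ s, ‖hardyConv p' F s‖ₑ
      ≤ ∫⁻ y, ENNReal.ofReal (hardyKernel p' (y + s)) * ‖F y‖ₑ := fun s =>
    (enorm_integral_le_lintegral_enorm _).trans_eq (lintegral_congr fun y => by
      rw [enorm_mul, Complex.enorm_ofReal, Real.enorm_of_nonneg (hardyKernel_nonneg _ _)])
  rw [eLpNorm_eq_lintegral_rpow_enorm_toReal (by simp [hp']) (by simp),
    eLpNorm_eq_lintegral_rpow_enorm_toReal (by simp [hp]) (by simp), ENNReal.toReal_ofReal hp'.le,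
    ENNReal.toReal_ofReal hp.le]
  calc (∫⁻ s, ‖hardyConv p' F s‖ₑ ^ p') ^ (1 / p')
      ≤ (∫⁻ s, (∫⁻ y, ENNReal.ofReal (hardyKernel p' (y + s)) * ‖F y‖ₑ) ^ p') ^ (1 / p') := by
        gcongr with s
        exact hpointwise s
    _ ≤ ((∫⁻ x, ENNReal.ofReal (hardyKernel p' x) ^ (p' / 2)) ^ (2 : ℝ)
          * (∫⁻ y, ‖F y‖ₑ ^ p) ^ (p' / p)) ^ (1 / p') := by
        gcongr
        exact lintegral_lintegral_add_mul_rpow_le hp hpp' hconj hH hF.enorm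
    _ = ENNReal.ofReal ((2 * π / p') ^ (1 / p')) * (∫⁻ y, ‖F y‖ₑ ^ p) ^ (1 / p) := by
        rw [lintegral_ofReal_hardyKernel_rpow hp', ENNReal.mul_rpow_of_nonneg _ _ (by positivity),
          ENNReal.ofReal_rpow_of_nonneg (by positivity) (by positivity), ← ENNReal.rpow_mul]
        congr 2
        field_simp

end

theorem stmt19 (p p' : ℝ) (hp1 : 1 ≤ p) (hp2 : p ≤ 2) (hp' : 1/p + 1/p' = 1) :
    (⨆ (f : ℝ → ℂ) (_ : MemLp f (ENNReal.ofReal p) (volume.restrict (Set.Ioi 0)) ∧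
        eLpNorm f (ENNReal.ofReal p) (volume.restrict (Set.Ioi 0)) = 1),
      eLpNorm (fun x => ∫ t in Set.Ioi (0:ℝ), ((Real.exp (-(x*t)) : ℝ) : ℂ) * f t)
        (ENNReal.ofReal p') (volume.restrict (Set.Ioi 0)))
    = (⨆ (F : ℝ → ℂ) (_ : MemLp F (ENNReal.ofReal p) volume ∧
        eLpNorm F (ENNReal.ofReal p) volume = 1),
      eLpNorm (fun s => ∫ y : ℝ, ((Real.exp ((y+s)/p' - Real.exp (y+s)) : ℝ) : ℂ) * F y)
        (ENNReal.ofReal p') volume) ∧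
    (⨆ (f : ℝ → ℂ) (_ : MemLp f (ENNReal.ofReal p) (volume.restrict (Set.Ioi 0)) ∧
        eLpNorm f (ENNReal.ofReal p) (volume.restrict (Set.Ioi 0)) = 1),
      eLpNorm (fun x => ∫ t in Set.Ioi (0:ℝ), ((Real.exp (-(x*t)) : ℝ) : ℂ) * f t)
        (ENNReal.ofReal p') (volume.restrict (Set.Ioi 0)))
      ≤ ENNReal.ofReal ((2 * Real.pi / p') ^ (1/p')) := by
  change lpOpNorm _ _ _ _ laplace = lpOpNorm _ _ _ _ (hardyConv p') ∧
    lpOpNorm _ _ _ _ laplace ≤ _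
  rcases hp1.eq_or_lt with rfl | hp1
  -- `1 / p' = 0` forces `p' = 0` (as `1 / 0 = 0`), and every `L^0` seminorm vanishes
  · obtain rfl : p' = 0 := by simpa using hp'
    simp [lpOpNorm_zero_right]
  have hp0 : 0 < p := one_pos.trans hp1
  have hp'0 : 0 < p' := by
    have : 1 / p < 1 := (div_lt_one hp0).2 hp1
    exact one_div_pos.1 (by linarith)
  have hpp' : p ≤ p' := by
    have : 1 / 2 ≤ 1 / p := one_div_le_one_div_of_le hp0 hp2
    exact (one_div_le_one_div hp'0 hp0).1 (by linarith)
  have hnorm := lpOpNorm_laplace_eq hp0 hp'0 hp'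
  refine ⟨hnorm, hnorm.trans_le (iSup₂_le fun F hF => ?_)⟩
  simpa [hF.2] using eLpNorm_hardyConv_le hp0 hpp' hp' hF.1.1
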